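/- arXiv:1910.01081 — 3 statements merged into one kernel-verified Lean document; each statement's English description precedes it below -/
import Mathlib

section
/- For any integers d ≥ 2 and α ≥ 2, the wreath product ℤ/dℤ ≀ S_α (the semidirect product (ℤ/dℤ)^α ⋊ S_α with S_α permuting coordinates) can be generated by 2 elements, and cannot be generated by fewer than 2 elements. -/
/-!
A group generated by at most one element is cyclic, hence abelian, while for `x ≠ 1` the element
`inl (mulSingle 0 x)` does not commute with `inr (0 1)`; so the rank is at least 2.

For the upper bound let `e₀ = mulSingle 0 g` for a generator `g` of `C`, and take `a = (e₀, c)`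
with `c : i ↦ i + 1` and `b = (0 1)`. Conjugation by `a` acts on a permutation fixing `c⁻¹ 0 = last` as conjugation by
`c`, because `e₀` is then left untouched; it therefore moves `(i, i+1)` to `(i+1, i+2)`, so `⟨a, b⟩`
contains every adjacent transposition and hence all of `S_α`. Then `a c⁻¹ = e₀` lies in it too,
and the conjugates `e_i` of `e₀` and their powers generate the base `C^α` since `C` is cyclic.
-/

/-- The action of `Equiv.Perm (Fin α)` on `Fin α → C` by permuting coordinates. -/
def wreathAut (C : Type*) [Group C] (α : ℕ) : Equiv.Perm (Fin α) →* MulAut (Fin α → C) where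
  toFun σ := MulEquiv.arrowCongr σ (MulEquiv.refl C)
  map_one' := by ext; rfl
  map_mul' := by intros; ext; rfl

/-- The wreath product `C ≀ S_α` as the semidirect product `C^α ⋊ S_α`. -/
abbrev Wreath (C : Type*) [Group C] (α : ℕ) : Type _ :=
  SemidirectProduct (Fin α → C) (Equiv.Perm (Fin α)) (wreathAut C α)

/-- The rank of a group: minimal cardinality of a generating set. -/
noncomputable def grank (G : Type*) [Group G] : Cardinal :=
  sInf {c : Cardinal | ∃ T : Set G, Cardinal.mk T = c ∧ Subgroup.closure T = ⊤}

open Equiv SemidirectProduct Subgroup Cardinal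

section Rank

variable {G : Type*} [Group G]

lemma grank_le_mk {T : Set G} (hT : closure T = ⊤) : grank G ≤ #T :=
  csInf_le (OrderBot.bddBelow _) ⟨T, rfl, hT⟩

lemma isCyclic_of_closure_eq_top_of_mk_le_one {T : Set G} (hT : closure T = ⊤) (hT₁ : #T ≤ 1) :
    IsCyclic G := by
  obtain ⟨x, hx⟩ : ∃ x, T ⊆ {x} := by
    rcases (mk_le_one_iff_set_subsingleton.mp hT₁).eq_empty_or_singleton with rfl | ⟨x, rfl⟩
    · exact ⟨1, Set.empty_subset _⟩
    · exact ⟨x, subset_rfl⟩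
  refine isCyclic_iff_exists_zpowers_eq_top.mpr ⟨x, top_unique ?_⟩
  rw [← hT, closure_le]
  exact hx.trans (Set.singleton_subset_iff.mpr (mem_zpowers x))

lemma two_le_grank {x y : G} (hxy : x * y ≠ y * x) : 2 ≤ grank G := by
  refine le_csInf ⟨_, Set.univ, rfl, closure_univ⟩ ?_
  rintro _ ⟨T, rfl, hT⟩
  rw [two_le_iff_one_lt]
  by_contra! hT₁
  have := isCyclic_of_closure_eq_top_of_mk_le_one hT hT₁
  exact hxy (mul_comm' x y)

lemma grank_eq_two {a b x y : G} (hab : closure {a, b} = ⊤) (hxy : x * y ≠ y * x) :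
    grank G = 2 := by
  refine le_antisymm ((grank_le_mk hab).trans ?_) (two_le_grank hxy)
  calc #({a, b} : Set G) ≤ #({b} : Set G) + 1 := mk_insert_le
    _ = 2 := by rw [mk_singleton, one_add_one_eq_two]

end Rank

namespace SemidirectProduct

variable {N K : Type*} [Group N] [Group K] {φ : K →* MulAut N}

lemma mk_mul_inr_mul_inv {n : N} {h : K} (k : K) (hfix : φ (h * k * h⁻¹) n = n) :
    (⟨n, h⟩ : N ⋊[φ] K) * inr k * ⟨n, h⟩⁻¹ = inr (h * k * h⁻¹) := by
  ext
  · simp only [map_mul, map_inv, MulAut.mul_apply, MulAut.inv_apply] at hfix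
    simp [hfix]
  · simp

end SemidirectProduct

section Wreath

variable {C : Type*} [Group C] {α : ℕ}

lemma wreathAut_mulSingle (σ : Perm (Fin α)) (i : Fin α) (x : C) :
    wreathAut C α σ (Pi.mulSingle i x : Fin α → C) = Pi.mulSingle (σ i) x := by
  funext j
  show (Pi.mulSingle i x : Fin α → C) (σ⁻¹ j) = _
  simp only [Pi.mulSingle_apply, Perm.inv_eq_iff_eq]

lemma inl_mulSingle_mul_inr_swap_ne {i j : Fin α} (hij : i ≠ j) {x : C} (hx : x ≠ 1) :
    (inl (Pi.mulSingle i x : Fin α → C) : Wreath C α) * inr (swap i j) ≠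
      inr (swap i j) * inl (Pi.mulSingle i x) := by
  intro h
  have hconj : (inl (wreathAut C α (swap i j) (Pi.mulSingle i x)) : Wreath C α) =
      inl (Pi.mulSingle i x) := by
    rw [inl_aut, ← h, map_inv, mul_inv_cancel_right]
  rw [inl_inj, wreathAut_mulSingle, swap_apply_left] at hconj
  have := congrFun hconj i
  rw [Pi.mulSingle_eq_of_ne hij, Pi.mulSingle_eq_same] at this
  exact hx this.symm

lemma inr_mem_of_mk_finRotate_mem {n : ℕ} {H : Subgroup (Wreath C (n + 2))} {x : C}
    (ha : ⟨Pi.mulSingle 0 x, finRotate (n + 2)⟩ ∈ H) (hb : inr (swap 0 1) ∈ H)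
    (σ : Perm (Fin (n + 2))) : inr σ ∈ H := by
  set c := finRotate (n + 2)
  have hconj : ∀ ρ, ρ (Fin.last _) = Fin.last _ → inr ρ ∈ H → inr (c * ρ * c⁻¹) ∈ H := by
    intro ρ hρ hmem
    have hfix : (c * ρ * c⁻¹) 0 = 0 := by
      have hlast : c⁻¹ 0 = Fin.last _ := Perm.inv_eq_iff_eq.mpr finRotate_last.symm
      rw [Perm.mul_apply, Perm.mul_apply, hlast, hρ, finRotate_last]
    rw [← mk_mul_inr_mul_inv (n := Pi.mulSingle 0 x) ρ (by rw [wreathAut_mulSingle, hfix])]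
    exact H.mul_mem (H.mul_mem ha hmem) (H.inv_mem ha)
  have hc : ∀ j : Fin (n + 1), c j.castSucc = j.succ := fun j => by
    rw [finRotate_apply, Fin.coeSucc_eq_succ]
  have hadj : ∀ i : Fin (n + 1), inr (swap i.castSucc i.succ) ∈ H := by
    intro i
    induction i using Fin.induction with
    | zero => exact hb
    | succ i ih =>
      rw [Fin.succ_castSucc] at ih
      have h := hconj _ (swap_apply_of_ne_of_ne (Fin.castSucc_ne_last _).symm
        (Fin.castSucc_ne_last _).symm) ih
      rwa [← swap_apply_apply, hc, hc, Fin.succ_castSucc] at h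
  have hσ : σ ∈ Submonoid.closure (Set.range fun i : Fin (n + 1) ↦ swap i.castSucc i.succ) := by
    rw [Perm.mclosure_swap_castSucc_succ]
    trivial
  exact (Submonoid.closure_le (S := (H.comap inr).toSubmonoid).mpr
    (by rintro _ ⟨i, rfl⟩; exact hadj i)) hσ

end Wreath

section CyclicBase

variable {C : Type*} [CommGroup C]

lemma eq_top_of_inr_mem_of_inl_mulSingle_mem {α : ℕ} {H : Subgroup (Wreath C α)} {g : C}
    (hg : ∀ x, x ∈ zpowers g) (i : Fin α) (hperm : ∀ σ, inr σ ∈ H)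
    (hsingle : inl (Pi.mulSingle i g) ∈ H) : H = ⊤ := by
  have hsingles : ∀ j (x : C), inl (Pi.mulSingle j x) ∈ H := by
    intro j x
    obtain ⟨k, rfl⟩ := mem_zpowers_iff.mp (hg x)
    have hj : inl (Pi.mulSingle j g) ∈ H := by
      have := H.mul_mem (H.mul_mem (hperm (swap i j)) hsingle) (hperm (swap i j)⁻¹)
      rwa [← inl_aut, wreathAut_mulSingle, swap_apply_left] at this
    rw [Pi.mulSingle_zpow, map_zpow]
    exact H.zpow_mem hj k
  have hbase : ∀ f, f ∈ H.comap inl := fun f => by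
    rw [← Finset.univ_prod_mulSingle f]
    exact prod_mem fun j _ => hsingles j (f j)
  refine eq_top_iff.mpr fun w _ => ?_
  rw [← inl_left_mul_inr_right w]
  exact H.mul_mem (hbase _) (hperm _)

lemma closure_mulSingle_finRotate_swap {n : ℕ} {g : C} (hg : ∀ x, x ∈ zpowers g) :
    closure {(⟨Pi.mulSingle 0 g, finRotate (n + 2)⟩ : Wreath C (n + 2)), inr (swap 0 1)} = ⊤ := by
  set a : Wreath C (n + 2) := ⟨Pi.mulSingle 0 g, finRotate (n + 2)⟩
  set H := closure {a, inr (swap 0 1)}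
  have ha : a ∈ H := subset_closure (Set.mem_insert _ _)
  have hperm : ∀ σ, inr σ ∈ H :=
    inr_mem_of_mk_finRotate_mem ha (subset_closure (Set.mem_insert_of_mem _ rfl))
  refine eq_top_of_inr_mem_of_inl_mulSingle_mem hg 0 hperm ?_
  have : a * (inr (finRotate (n + 2)))⁻¹ = inl (Pi.mulSingle 0 g) := by ext <;> simp [a]
  rw [← this]
  exact H.mul_mem ha (H.inv_mem (hperm _))

theorem grank_wreath_of_isCyclic [IsCyclic C] [Nontrivial C] {α : ℕ} (hα : 2 ≤ α) :
    grank (Wreath C α) = 2 := by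
  obtain ⟨n, rfl⟩ : ∃ n, α = n + 2 := ⟨α - 2, by omega⟩
  obtain ⟨g, hg⟩ := IsCyclic.exists_generator (α := C)
  obtain ⟨x, hx⟩ := exists_ne (1 : C)
  exact grank_eq_two (closure_mulSingle_finRotate_swap hg)
    (inl_mulSingle_mul_inr_swap_ne (i := 0) (j := 1) (by simp) hx)

end CyclicBase

/-- For d, α ≥ 2 the wreath product ℤ/dℤ ≀ S_α has rank exactly 2. -/
theorem rank_zmod_wreath_symm (d α : ℕ) (hd : 2 ≤ d) (hα : 2 ≤ α) :
    grank (Wreath (Multiplicative (ZMod d)) α) = 2 := by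
  have : Fact (1 < d) := ⟨hd⟩
  exact grank_wreath_of_isCyclic hα
end

section
/- If M is a finite monoid with group of units U, then Rank(M) = Rank(M : U) + Rank(U), where Rank(M : U) = min{|W| : M is generated by U ∪ W} is the relative rank of U in M. -/
/-- The rank of a monoid: minimal cardinality of a (finite) generating set. -/
noncomputable def mrank (M : Type*) [Monoid M] : ℕ :=
  sInf {n | ∃ T : Finset M, T.card = n ∧ Submonoid.closure (T : Set M) = ⊤}

/-- The relative rank of a subset `U` in a monoid `M`: the minimal cardinality of a
set `W` such that `U ∪ W` generates `M`. -/
noncomputable def relRank (M : Type*) [Monoid M] (U : Set M) : ℕ :=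
  sInf {n | ∃ W : Finset M, W.card = n ∧ Submonoid.closure (U ∪ (W : Set M)) = ⊤}

/-!
A generating set `T` of `M` splits into its units and its non-units. In a finite monoid a
product is a unit only if both factors are (finite monoids are Dedekind-finite), so every unit
generated by `T` is a product of units of `T`: the units of `T` generate `Mˣ`, and the
non-units together with `Mˣ` generate `M`. Hence `Rank(M : U) + Rank(U) ≤ Rank(M)`. Conversely,
a generating set of `Mˣ` together with a relative generating set of `Mˣ` in `M` generates `M`.
-/

section Rank

variable {M : Type*} [Monoid M]

theorem mrank_le_card {T : Finset M} (hT : Submonoid.closure (T : Set M) = ⊤) :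
    mrank M ≤ T.card :=
  Nat.sInf_le ⟨T, rfl, hT⟩

theorem exists_finset_card_eq_mrank [Monoid.FG M] :
    ∃ T : Finset M, T.card = mrank M ∧ Submonoid.closure (T : Set M) = ⊤ :=
  Nat.sInf_mem (s := {n | ∃ T : Finset M, T.card = n ∧ Submonoid.closure (T : Set M) = ⊤})
    (by obtain ⟨T, hT⟩ := Monoid.fg_def.mp ‹_›; exact ⟨T.card, T, rfl, hT⟩)

theorem relRank_le_card {U : Set M} {W : Finset M}
    (hW : Submonoid.closure (U ∪ (W : Set M)) = ⊤) : relRank M U ≤ W.card :=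
  Nat.sInf_le ⟨W, rfl, hW⟩

theorem exists_finset_card_eq_relRank [Monoid.FG M] (U : Set M) :
    ∃ W : Finset M, W.card = relRank M U ∧ Submonoid.closure (U ∪ (W : Set M)) = ⊤ :=
  Nat.sInf_mem
    (s := {n | ∃ W : Finset M, W.card = n ∧ Submonoid.closure (U ∪ (W : Set M)) = ⊤}) (by
      obtain ⟨T, hT⟩ := Monoid.fg_def.mp ‹_›
      exact ⟨T.card, T, rfl, eq_top_mono (Submonoid.closure_mono Set.subset_union_right) hT⟩)

end Rank

section Units

variable {M : Type*} [Monoid M]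

theorem setOf_isUnit_subset_closure_image_val {B : Set Mˣ}
    (hB : Submonoid.closure B = ⊤) :
    {x : M | IsUnit x} ⊆ Submonoid.closure (Units.val '' B) := by
  rintro _ ⟨u, rfl⟩
  change Units.coeHom M u ∈ Submonoid.closure (Units.coeHom M '' B)
  rw [← MonoidHom.map_mclosure, hB]
  exact Submonoid.mem_map_of_mem _ (Submonoid.mem_top u)

theorem closure_image_val_union_eq_top {B : Set Mˣ} {W : Set M}
    (hB : Submonoid.closure B = ⊤) (hW : Submonoid.closure ({x : M | IsUnit x} ∪ W) = ⊤) :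
    Submonoid.closure (Units.val '' B ∪ W) = ⊤ := by
  refine eq_top_mono (Submonoid.closure_le.mpr ?_) hW
  rintro x (hx | hx)
  · exact Submonoid.closure_mono Set.subset_union_left
      (setOf_isUnit_subset_closure_image_val hB hx)
  · exact Submonoid.subset_closure (Set.mem_union_right _ hx)

variable [IsDedekindFiniteMonoid M]

theorem Submonoid.mem_closure_inter_setOf_isUnit {s : Set M} {x : M}
    (hx : x ∈ Submonoid.closure s) (hu : IsUnit x) :
    x ∈ Submonoid.closure (s ∩ {y | IsUnit y}) := by
  induction hx using Submonoid.closure_induction with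
  | mem y hy => exact Submonoid.subset_closure ⟨hy, hu⟩
  | one => exact one_mem _
  | mul a b _ _ iha ihb =>
    exact mul_mem (iha (isUnit_of_mul_isUnit_left hu)) (ihb (isUnit_of_mul_isUnit_right hu))

theorem closure_preimage_val_eq_top {s : Set M} (hs : Submonoid.closure s = ⊤) :
    Submonoid.closure (Units.val ⁻¹' s : Set Mˣ) = ⊤ := by
  refine eq_top_iff.mpr fun u _ => ?_
  have hu :
      Units.coeHom M u ∈ Submonoid.closure (Units.coeHom M '' (Units.coeHom M ⁻¹' s)) := by
    rw [Set.image_preimage_eq_inter_range]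
    exact Submonoid.mem_closure_inter_setOf_isUnit (hs ▸ Submonoid.mem_top _) u.isUnit
  rwa [← MonoidHom.map_mclosure, Submonoid.mem_map_iff_mem Units.val_injective] at hu

end Units

section RankUnits

variable {M : Type*} [Monoid M]

theorem mrank_le_relRank_add_mrank_units [Monoid.FG M] [Monoid.FG Mˣ] :
    mrank M ≤ relRank M {x : M | IsUnit x} + mrank Mˣ := by
  classical
  obtain ⟨W, hW, hWgen⟩ := exists_finset_card_eq_relRank {x : M | IsUnit x}
  obtain ⟨B, hB, hBgen⟩ := exists_finset_card_eq_mrank (M := Mˣ)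
  have hgen : Submonoid.closure ((B.image Units.val ∪ W : Finset M) : Set M) = ⊤ := by
    push_cast
    exact closure_image_val_union_eq_top hBgen hWgen
  calc mrank M ≤ (B.image Units.val ∪ W).card := mrank_le_card hgen
    _ ≤ (B.image Units.val).card + W.card := Finset.card_union_le _ _
    _ ≤ B.card + W.card := by grw [Finset.card_image_le]
    _ = relRank M {x : M | IsUnit x} + mrank Mˣ := by rw [hW, hB, add_comm]

theorem relRank_add_mrank_units_le [IsDedekindFiniteMonoid M] [Monoid.FG M] :
    relRank M {x : M | IsUnit x} + mrank Mˣ ≤ mrank M := by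
  classical
  obtain ⟨T, hT, hTgen⟩ := exists_finset_card_eq_mrank (M := M)
  set nonunits : Finset M := {x ∈ T | ¬IsUnit x}
  set units : Finset Mˣ := T.preimage Units.val Units.val_injective.injOn
  have hnonunits : Submonoid.closure ({x : M | IsUnit x} ∪ (nonunits : Set M)) = ⊤ :=
    eq_top_mono (Submonoid.closure_mono fun x hx => by
      by_cases hu : IsUnit x <;> simp_all [nonunits]) hTgen
  have hunits : Submonoid.closure (units : Set Mˣ) = ⊤ := by
    rw [Finset.coe_preimage]
    exact closure_preimage_val_eq_top hTgen
  calc relRank M {x : M | IsUnit x} + mrank Mˣ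
      ≤ nonunits.card + units.card :=
        add_le_add (relRank_le_card hnonunits) (mrank_le_card hunits)
    _ = nonunits.card + {x ∈ T | IsUnit x}.card := by rw [Finset.card_preimage]; rfl
    _ = mrank M := by rw [add_comm, Finset.card_filter_add_card_filter_not, hT]

end RankUnits

/-- For a finite monoid `M` with group of units `U`,
`Rank(M) = Rank(M : U) + Rank(U)`. -/
theorem mrank_eq_relRank_units_add_rank_units (M : Type*) [Monoid M] [Fintype M] :
    mrank M = relRank M {x : M | IsUnit x} + mrank Mˣ := by
  have := Monoid.fg_of_finite (M := M)
  have := Monoid.fg_of_finite (M := Mˣ)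
  exact le_antisymm mrank_le_relRank_add_mrank_units relRank_add_mrank_units_le
end

section
/- Let G be a group and A a finite set with |A| ≥ 2, and let H be a subgroup of G. There is exactly one G-orbit of configurations in A^G with stabilizer conjugate to H if and only if H has index 2 in G and |A| = 2. -/
/-- The shift action of `G` on the full shift `G → A`: `(g · x)(h) = x (g⁻¹ h)`. -/
instance shiftMulAction (G A : Type*) [Group G] : MulAction G (G → A) where
  smul g x := fun h => x (g⁻¹ * h)
  one_smul x := by funext h; show x (1⁻¹ * h) = x h; simp
  mul_smul g₁ g₂ x := by
    funext h
    show x ((g₁ * g₂)⁻¹ * h) = x (g₂⁻¹ * (g₁⁻¹ * h))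
    rw [mul_inv_rev, mul_assoc]

private lemma shift_smul_apply {G A : Type*} [Group G] (g : G) (x : G → A) (h : G) :
    (g • x) h = x (g⁻¹ * h) := rfl

open Classical in
/-- The configuration equal to `a` on `H` and `b` elsewhere. -/
private noncomputable def chiCfg {G : Type*} [Group G] {A : Type*} (H : Subgroup G) (a b : A) :
    G → A := fun k => if k ∈ H then a else b

private lemma chiCfg_mem {G : Type*} [Group G] {A : Type*} {H : Subgroup G} (a b : A) {k : G}
    (hk : k ∈ H) : chiCfg H a b k = a := by
  unfold chiCfg; rw [if_pos hk]

private lemma chiCfg_notMem {G : Type*} [Group G] {A : Type*} {H : Subgroup G} (a b : A) {k : G}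
    (hk : k ∉ H) : chiCfg H a b k = b := by
  unfold chiCfg; rw [if_neg hk]

private lemma stabilizer_chiCfg {G A : Type*} [Group G] {H : Subgroup G} {a b : A} (hab : a ≠ b) :
    MulAction.stabilizer G (chiCfg H a b) = H := by
  ext g
  simp only [MulAction.mem_stabilizer_iff]
  constructor
  · intro hg
    by_contra hgH
    have h1 := congrFun hg g
    rw [shift_smul_apply, inv_mul_cancel] at h1
    rw [chiCfg_mem a b (H.one_mem), chiCfg_notMem a b hgH] at h1
    exact hab h1
  · intro hg
    funext k
    rw [shift_smul_apply]
    by_cases hk : k ∈ H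
    · rw [chiCfg_mem a b hk, chiCfg_mem a b (H.mul_mem (H.inv_mem hg) hk)]
    · rw [chiCfg_notMem a b hk, chiCfg_notMem a b
        (fun hc => hk (by simpa using H.mul_mem hg hc))]

/-- If `x₀` has stabilizer exactly `H`, every configuration in its orbit has stabilizer
a conjugate of `H`. -/
private lemma orbit_prop {G A : Type*} [Group G] {H : Subgroup G} {x₀ : G → A}
    (hx : MulAction.stabilizer G x₀ = H) :
    ∀ x ∈ MulAction.orbitRel.Quotient.orbit (Quotient.mk'' x₀ :
        MulAction.orbitRel.Quotient G (G → A)),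
      ∃ g : G, MulAction.stabilizer G x = Subgroup.map (MulAut.conj g).toMonoidHom H := by
  intro x hxmem
  rw [MulAction.orbitRel.Quotient.mem_orbit] at hxmem
  have hx2 : x ∈ MulAction.orbit G x₀ := by
    rw [← MulAction.orbitRel_apply]
    exact Quotient.eq''.mp hxmem
  obtain ⟨g, hg⟩ := hx2
  exact ⟨g, by rw [← hg, MulAction.stabilizer_smul_eq_stabilizer_map_conj, hx]⟩

/-- There is exactly one G-orbit of configurations in A^G with stabilizer conjugate
to H if and only if H has index 2 in G and |A| = 2. -/
theorem unique_orbit_iff_index_two (G A : Type*) [Group G] [Fintype A]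
    (hA : 2 ≤ Fintype.card A) (H : Subgroup G) :
    Nat.card {ω : MulAction.orbitRel.Quotient G (G → A) //
        ∀ x ∈ ω.orbit, ∃ g : G,
          MulAction.stabilizer G x = Subgroup.map (MulAut.conj g).toMonoidHom H} = 1 ↔
      H.index = 2 ∧ Fintype.card A = 2 := by
  classical
  obtain ⟨a, b, hab⟩ := Fintype.exists_pair_of_one_lt_card hA
  rw [Nat.card_eq_one_iff_unique]
  constructor
  · rintro ⟨hsub, _⟩
    -- First: H ≠ ⊤.
    have hHne : H ≠ ⊤ := by
      intro hHtop
      subst hHtop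
      -- constant configurations give two distinct orbits
      have hconst : ∀ c : A, MulAction.stabilizer G (Function.const G c) = (⊤ : Subgroup G) := by
        intro c
        ext g
        simp only [MulAction.mem_stabilizer_iff, Subgroup.mem_top, iff_true]
        funext k; rfl
      have hsame := hsub.allEq ⟨Quotient.mk'' (Function.const G a), orbit_prop (hconst a)⟩
        ⟨Quotient.mk'' (Function.const G b), orbit_prop (hconst b)⟩
      have hq : (Quotient.mk'' (Function.const G a) :
          MulAction.orbitRel.Quotient G (G → A)) = Quotient.mk'' (Function.const G b) :=
        congrArg Subtype.val hsame
      have hrel : MulAction.orbitRel G (G → A) (Function.const G a) (Function.const G b) :=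
        Quotient.eq''.mp hq
      rw [MulAction.orbitRel_apply] at hrel
      obtain ⟨g, hg⟩ := hrel
      have h1 : Function.const G b (g⁻¹ * 1) = Function.const G a 1 := congrFun hg 1
      exact hab (by simpa using h1.symm)
    obtain ⟨k₀, hk₀⟩ : ∃ k₀ : G, k₀ ∉ H := by
      by_contra hc
      push_neg at hc
      exact hHne ((Subgroup.eq_top_iff' H).mpr hc)
    -- Second: |A| = 2.
    have hall : ∀ u : A, u = a ∨ u = b := by
      intro u
      by_contra hu
      push_neg at hu
      obtain ⟨hua, hub⟩ := hu
      -- chiCfg H a b and chiCfg H a u give distinct orbits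
      have hsame := hsub.allEq ⟨Quotient.mk'' (chiCfg H a b), orbit_prop (stabilizer_chiCfg hab)⟩
        ⟨Quotient.mk'' (chiCfg H a u), orbit_prop (stabilizer_chiCfg (Ne.symm hua))⟩
      have hq : (Quotient.mk'' (chiCfg H a b) :
          MulAction.orbitRel.Quotient G (G → A)) = Quotient.mk'' (chiCfg H a u) :=
        congrArg Subtype.val hsame
      have hrel := Quotient.eq''.mp hq
      rw [MulAction.orbitRel_apply] at hrel
      obtain ⟨g, hg⟩ := hrel
      have h1 : chiCfg H a u (g⁻¹ * k₀) = chiCfg H a b k₀ := congrFun hg k₀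
      rw [chiCfg_notMem a b hk₀] at h1
      by_cases hc : g⁻¹ * k₀ ∈ H
      · rw [chiCfg_mem a u hc] at h1; exact hab h1
      · rw [chiCfg_notMem a u hc] at h1; exact hub h1
    have hcard : Fintype.card A = 2 := by
      refine le_antisymm ?_ hA
      have hsub2 : (Finset.univ : Finset A) ⊆ {a, b} := by
        intro u _
        rcases hall u with h | h <;> simp [h]
      calc Fintype.card A = (Finset.univ : Finset A).card := rfl
        _ ≤ ({a, b} : Finset A).card := Finset.card_le_card hsub2
        _ ≤ 2 := Finset.card_insert_le a {b} |>.trans (by simp)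
    refine ⟨?_, hcard⟩
    -- Third: index = 2.
    have hsame := hsub.allEq ⟨Quotient.mk'' (chiCfg H a b), orbit_prop (stabilizer_chiCfg hab)⟩
      ⟨Quotient.mk'' (chiCfg H b a), orbit_prop (stabilizer_chiCfg (Ne.symm hab))⟩
    have hq : (Quotient.mk'' (chiCfg H a b) :
        MulAction.orbitRel.Quotient G (G → A)) = Quotient.mk'' (chiCfg H b a) :=
      congrArg Subtype.val hsame
    have hrel := Quotient.eq''.mp hq
    rw [MulAction.orbitRel_apply] at hrel
    obtain ⟨g, hg⟩ := hrel
    -- hg : g • chiCfg H b a = chiCfg H a b, i.e. ∀ m, chiCfg H b a (g⁻¹ m) = chiCfg H a b m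
    have hx : ∀ m : G, g⁻¹ * m ∈ H ↔ m ∉ H := by
      intro m
      have h1 : chiCfg H b a (g⁻¹ * m) = chiCfg H a b m := congrFun hg m
      constructor
      · intro hm hmH
        rw [chiCfg_mem b a hm, chiCfg_mem a b hmH] at h1
        exact hab h1.symm
      · intro hmH
        by_contra hc
        rw [chiCfg_notMem b a hc, chiCfg_notMem a b hmH] at h1
        exact hab h1
    rw [Subgroup.index_eq_two_iff]
    refine ⟨g, fun m => ?_⟩
    have hmg : m * g ∈ H ↔ m ∉ H := by
      have := hx m⁻¹
      rw [← mul_inv_rev, H.inv_mem_iff, H.inv_mem_iff] at this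
      exact this
    by_cases hm : m ∈ H
    · exact Or.inr ⟨hm, fun hc => (hmg.mp hc) hm⟩
    · exact Or.inl ⟨hmg.mpr hm, hm⟩
  · rintro ⟨hidx, hcard⟩
    have hHne : H ≠ ⊤ := by
      intro hHtop
      rw [hHtop, Subgroup.index_top] at hidx
      omega
    obtain ⟨k₀, hk₀⟩ : ∃ k₀ : G, k₀ ∉ H := by
      by_contra hc
      push_neg at hc
      exact hHne ((Subgroup.eq_top_iff' H).mpr hc)
    have hall : ∀ u : A, u = a ∨ u = b := by
      intro u
      by_contra hu
      push_neg at hu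
      obtain ⟨hua, hub⟩ := hu
      have : 3 ≤ Fintype.card A := by
        have h3 : ({u, a, b} : Finset A).card = 3 := by
          rw [Finset.card_insert_of_notMem (by simp [hua, hub]),
            Finset.card_insert_of_notMem (by simp [hab]), Finset.card_singleton]
        calc 3 = ({u, a, b} : Finset A).card := h3.symm
          _ ≤ Fintype.card A := Finset.card_le_univ _
      omega
    -- key index-2 fact
    have hmul : ∀ p q : G, p ∉ H → q ∉ H → p * q ∈ H := by
      intro p q hp hq
      rw [Subgroup.mul_mem_iff_of_index_two hidx]
      simp [hp, hq]
    constructor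
    · -- subsingleton
      constructor
      rintro ⟨ω₁, p₁⟩ ⟨ω₂, p₂⟩
      have key : ∀ (ω : MulAction.orbitRel.Quotient G (G → A)),
          (∀ x ∈ ω.orbit, ∃ g : G,
            MulAction.stabilizer G x = Subgroup.map (MulAut.conj g).toMonoidHom H) →
          ω = Quotient.mk'' (chiCfg H a b) := by
        intro ω hω
        induction ω using Quotient.inductionOn' with
        | h y =>
        obtain ⟨g, hgstab⟩ := hω y (by rw [MulAction.orbitRel.Quotient.mem_orbit])
        -- conjugate of H is H since H is normal (index 2)
        have hconjH : Subgroup.map (MulAut.conj g).toMonoidHom H = H := by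
          ext x
          simp only [Subgroup.mem_map, MulAut.conj_apply, MonoidHom.coe_coe]
          constructor
          · rintro ⟨h, hh, rfl⟩
            by_cases hgH : g ∈ H
            · exact H.mul_mem (H.mul_mem hgH hh) (H.inv_mem hgH)
            · have h1 : g * h ∉ H := fun hc => hgH (by
                simpa using H.mul_mem hc (H.inv_mem hh))
              exact hmul _ _ h1 (fun hc => hgH (H.inv_mem_iff.mp hc))
          · intro hx
            refine ⟨g⁻¹ * x * g, ?_, show g * (g⁻¹ * x * g) * g⁻¹ = x by group⟩
            by_cases hgH : g ∈ H
            · exact H.mul_mem (H.mul_mem (H.inv_mem hgH) hx) hgH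
            · have h1 : g⁻¹ * x ∉ H := fun hc => hgH (H.inv_mem_iff.mp (by
                simpa using H.mul_mem hc (H.inv_mem hx)))
              exact hmul _ _ h1 hgH
        rw [hconjH] at hgstab
        -- y is constant on right cosets of H
        have hHfix : ∀ h ∈ H, ∀ m : G, y (h⁻¹ * m) = y m := by
          intro h hh m
          have : h • y = y := by
            rw [← MulAction.mem_stabilizer_iff, hgstab]; exact hh
          have := congrFun this m
          rwa [shift_smul_apply] at this
        set c := y 1 with hc
        set d := y k₀ with hd
        have hform : ∀ k : G, y k = if k ∈ H then c else d := by
          intro k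
          by_cases hk : k ∈ H
          · rw [if_pos hk]
            have := hHfix k⁻¹ (H.inv_mem hk) 1
            rwa [inv_inv, mul_one] at this
          · rw [if_neg hk]
            have hmem : k₀ * k⁻¹ ∈ H := hmul _ _ hk₀ (fun hc => hk (H.inv_mem_iff.mp hc))
            have := hHfix _ hmem k₀
            rw [mul_inv_rev, inv_inv, mul_assoc, inv_mul_cancel, mul_one] at this
            exact this
        have hcd : c ≠ d := by
          intro hcd
          have hconst : y = Function.const G c := by
            funext k
            rw [hform k]
            by_cases hk : k ∈ H <;> simp [hk, hcd]
          have : MulAction.stabilizer G y = ⊤ := by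
            ext g'
            simp only [MulAction.mem_stabilizer_iff, Subgroup.mem_top, iff_true]
            funext m
            rw [shift_smul_apply, hconst]
            rfl
          rw [hgstab] at this
          exact hHne this
        -- identify y with chiCfg
        apply Quotient.sound'
        show MulAction.orbitRel G (G → A) y (chiCfg H a b)
        rw [MulAction.orbitRel_apply]
        rcases hall c with hca | hcb
        · -- c = a, so d = b, y = chiCfg H a b
          have hdb : d = b := by
            rcases hall d with h | h
            · exact absurd (hca.trans h.symm) hcd
            · exact h
          have : y = chiCfg H a b := by
            funext k
            rw [hform k]
            by_cases hk : k ∈ H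
            · rw [if_pos hk, chiCfg_mem a b hk, hca]
            · rw [if_neg hk, chiCfg_notMem a b hk, hdb]
          rw [this]
          exact MulAction.mem_orbit_self _
        · -- c = b, so d = a, y = k₀ • chiCfg H a b
          have hda : d = a := by
            rcases hall d with h | h
            · exact h
            · exact absurd (hcb.trans h.symm) hcd
          have hy : y = k₀ • chiCfg H a b := by
            funext k
            rw [hform k, shift_smul_apply]
            by_cases hk : k ∈ H
            · rw [if_pos hk, chiCfg_notMem a b
                (fun hc' => hk₀ (H.inv_mem_iff.mp (by simpa using H.mul_mem hc' (H.inv_mem hk)))),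
                hcb]
            · rw [if_neg hk, chiCfg_mem a b (hmul _ _ (fun hc' => hk₀ (H.inv_mem_iff.mp hc')) hk),
                hda]
          rw [hy]
          exact MulAction.mem_orbit _ _
      have h1 := key ω₁ p₁
      have h2 := key ω₂ p₂
      exact Subtype.ext (h1.trans h2.symm)
    · exact ⟨⟨Quotient.mk'' (chiCfg H a b), orbit_prop (stabilizer_chiCfg hab)⟩⟩
end
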